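/- Let R ∈ (0, +∞], let λ, μ : [0,R) → ℝ be smooth positive functions, let H > 0 be a constant, and define c(r) = r⁻²∫₀^r s·λ(s)²·μ(s) ds and g₂(r) = 2Hr·c(r)/(λ(r)·μ(r)) for r ∈ (0,R). If ρ_H ∈ (0,R) satisfies g₂(ρ_H) = 1 and g₂′(ρ_H) = 0, then (λμ)′(ρ_H)/(λ(ρ_H)²·μ(ρ_H)) + 1/(ρ_H·λ(ρ_H)) = 2H; that is, the vertical cylinder over the circle of radius ρ_H in 𝔼(M,0,μ) has constant mean curvature equal to H. -/

import Mathlib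

/-!
With `F(r) = ∫₀^r s λ² μ ds = r² c(r)`, the numerator of `g₂` is `2H·r c(r) = 2H·F(r)/r`, whose
derivative is `2H(λ²μ - c)`. At a critical point of the quotient `g₂` where `g₂ = 1`, numerator and
denominator have equal values and equal derivatives, so `(λμ)' = 2Hλ²μ - 2Hc = 2Hλ²μ - λμ/ρ`;
dividing by `λ²μ` gives the mean curvature formula of the cylinder.
-/

open Topology Set

noncomputable def cProfile (lam mu : ℝ → ℝ) (r : ℝ) : ℝ :=
  (r ^ 2)⁻¹ * ∫ s in (0:ℝ)..r, s * lam s ^ 2 * mu s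

noncomputable def g2 (lam mu : ℝ → ℝ) (H r : ℝ) : ℝ :=
  2 * H * r * cProfile lam mu r / (lam r * mu r)

theorem HasDerivAt.eq_of_deriv_div_eq_zero {g h : ℝ → ℝ} {g' h' x : ℝ}
    (hg : HasDerivAt g g' x) (hh : HasDerivAt h h' x) (hx : h x ≠ 0) (hgh : g x = h x)
    (hcrit : _root_.deriv (fun y => g y / h y) x = 0) : g' = h' := by
  have hquot : (g' * h x - g x * h') / h x ^ 2 = 0 := (hg.div hh hx).deriv ▸ hcrit
  have hnum := (div_eq_zero_iff.mp hquot).resolve_right (pow_ne_zero 2 hx)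
  have hfactor : h x * (g' - h') = 0 := by linear_combination hnum + h' * hgh
  exact sub_eq_zero.mp ((mul_eq_zero.mp hfactor).resolve_left hx)

theorem hasDerivAt_integral_of_continuousOn {E : Type*} [NormedAddCommGroup E] [NormedSpace ℝ E]
    [CompleteSpace E] {f : ℝ → E} {S : Set ℝ} {a b : ℝ} (hf : ContinuousOn f S) (hS : S ∈ 𝓝 b)
    (hab : uIcc a b ⊆ S) : HasDerivAt (fun u => ∫ s in a..u, f s) (f b) b :=
  intervalIntegral.integral_hasDerivAt_right (hf.mono hab).intervalIntegrable
    (hf.mono interior_subset |>.stronglyMeasurableAtFilter isOpen_interior b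
      (mem_interior_iff_mem_nhds.mpr hS))
    (hf.continuousAt hS)

theorem hasDerivAt_mul_cProfile {lam mu : ℝ → ℝ} {S : Set ℝ} {r : ℝ}
    (hlam : ContinuousOn lam S) (hmu : ContinuousOn mu S) (hS : S ∈ 𝓝 r)
    (hr0 : uIcc 0 r ⊆ S) (hr : r ≠ 0) :
    HasDerivAt (fun u => u * cProfile lam mu u) (lam r ^ 2 * mu r - cProfile lam mu r) r := by
  have hF : HasDerivAt (fun u => ∫ s in (0:ℝ)..u, s * lam s ^ 2 * mu s)
      (r * lam r ^ 2 * mu r) r :=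
    hasDerivAt_integral_of_continuousOn ((continuousOn_id.mul (hlam.pow 2)).mul hmu) hS hr0
  have hrc : (fun u => u * cProfile lam mu u) =
      fun u => u⁻¹ * ∫ s in (0:ℝ)..u, s * lam s ^ 2 * mu s := by
    funext u
    rcases eq_or_ne u 0 with rfl | hu
    · simp
    · rw [cProfile, ← mul_assoc]
      field_simp
  rw [hrc]
  refine ((hasDerivAt_inv hr).mul hF).congr_deriv ?_
  unfold cProfile
  field_simp
  ring

theorem cylinder_bounding_cigar_has_mean_curvature_H_general
    (S : Set ℝ) (hS : S = Set.Ici 0 ∨ ∃ R : ℝ, 0 < R ∧ S = Set.Ico 0 R)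
    (lam mu : ℝ → ℝ)
    (hlam : ContDiffOn ℝ (⊤ : ℕ∞) lam S) (hmu : ContDiffOn ℝ (⊤ : ℕ∞) mu S)
    (hlampos : ∀ r ∈ S, 0 < lam r) (hmupos : ∀ r ∈ S, 0 < mu r)
    (H : ℝ)
    (ρH : ℝ) (hρH : ρH ∈ S) (hρHpos : 0 < ρH)
    (heq : g2 lam mu H ρH = 1)
    (hder : deriv (g2 lam mu H) ρH = 0) :
    deriv (fun r => lam r * mu r) ρH / (lam ρH ^ 2 * mu ρH)
      + 1 / (ρH * lam ρH) = 2 * H := by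
  have hSρ : S ∈ 𝓝 ρH := by
    rcases hS with rfl | ⟨R, -, rfl⟩
    · exact Ici_mem_nhds hρHpos
    · exact Ico_mem_nhds hρHpos hρH.2
  have hIcc : uIcc 0 ρH ⊆ S := by
    rw [uIcc_of_le hρHpos.le]
    rcases hS with rfl | ⟨R, -, rfl⟩
    · exact Icc_subset_Ici_self
    · exact Icc_subset_Ico_right hρH.2
  have hL := hlampos ρH hρH
  have hM := hmupos ρH hρH
  have hnum : HasDerivAt (fun r => 2 * H * r * cProfile lam mu r)
      (2 * H * (lam ρH ^ 2 * mu ρH - cProfile lam mu ρH)) ρH := by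
    simpa only [mul_assoc] using (hasDerivAt_mul_cProfile hlam.continuousOn hmu.continuousOn
      hSρ hIcc hρHpos.ne').const_mul (2 * H)
  have hden : HasDerivAt (fun r => lam r * mu r) (deriv (fun r => lam r * mu r) ρH) ρH :=
    ((hlam.contDiffAt hSρ).mul (hmu.contDiffAt hSρ)).differentiableAt (by simp) |>.hasDerivAt
  have hval : 2 * H * ρH * cProfile lam mu ρH = lam ρH * mu ρH :=
    (div_eq_one_iff_eq (by positivity)).mp heq
  have hslope : 2 * H * (lam ρH ^ 2 * mu ρH - cProfile lam mu ρH) =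
      deriv (fun r => lam r * mu r) ρH :=
    hnum.eq_of_deriv_div_eq_zero hden (by positivity) hval hder
  rw [← hslope]
  field_simp
  linear_combination (-1 : ℝ) * hval

/-- If `g₂(ρ_H) = 1` and `g₂′(ρ_H) = 0`, then the vertical cylinder over the circle of
radius `ρ_H` in `𝔼(M,0,μ)` has constant mean curvature `H`:
`(λμ)′(ρ_H)/(λ(ρ_H)²μ(ρ_H)) + 1/(ρ_H·λ(ρ_H)) = 2H`. -/
theorem cylinder_bounding_cigar_has_mean_curvature_H
    (S : Set ℝ) (hS : S = Set.Ici 0 ∨ ∃ R : ℝ, 0 < R ∧ S = Set.Ico 0 R)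
    (lam mu : ℝ → ℝ)
    (hlam : ContDiffOn ℝ (⊤ : ℕ∞) lam S) (hmu : ContDiffOn ℝ (⊤ : ℕ∞) mu S)
    (hlampos : ∀ r ∈ S, 0 < lam r) (hmupos : ∀ r ∈ S, 0 < mu r)
    (H : ℝ) (hH : 0 < H)
    (ρH : ℝ) (hρH : ρH ∈ S) (hρHpos : 0 < ρH)
    (heq : g2 lam mu H ρH = 1)
    (hder : deriv (g2 lam mu H) ρH = 0) :
    deriv (fun r => lam r * mu r) ρH / (lam ρH ^ 2 * mu ρH)
      + 1 / (ρH * lam ρH) = 2 * H :=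
  cylinder_bounding_cigar_has_mean_curvature_H_general S hS lam mu hlam hmu hlampos hmupos H ρH hρH
    hρHpos heq hder
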